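/- Lemma 5.12, case (B): Let n ≥ 2 and let L : ℝ^n ∖ {0} → ℝ be smooth, positively 2-homogeneous, with positive definite fundamental tensor g_ij(y) := (1/2) L_{·i·j}(y) for every y ≠ 0 (a fiberwise Finsler datum). Let α ∈ ℝ and κ > α(α + n − 2). If f : ℝ^n ∖ {0} → ℝ is smooth, positively α-homogeneous, and satisfies κ f − L g^{ab} f_{·a·b} = 0 on ℝ^n ∖ {0}, then f = 0. -/

import Mathlib

open scoped BigOperators

noncomputable section

/-- Partial derivative `∂f/∂y^i`. -/
def pd {n : ℕ} (f : (Fin n → ℝ) → ℝ) (i : Fin n) : (Fin n → ℝ) → ℝ :=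
  fun y => fderiv ℝ f y (Pi.single i 1)

/-- `C` is a conic set: stable under positive scalings. -/
def Conic {n : ℕ} (C : Set (Fin n → ℝ)) : Prop :=
  ∀ ⦃y⦄, y ∈ C → ∀ ⦃t : ℝ⦄, 0 < t → t • y ∈ C

/-- `f` is positively `α`-homogeneous on `C`. -/
def PosHom {n : ℕ} (α : ℝ) (C : Set (Fin n → ℝ)) (f : (Fin n → ℝ) → ℝ) : Prop :=
  ∀ y ∈ C, ∀ t : ℝ, 0 < t → f (t • y) = t ^ α * f y

/-- Vector-valued positively `α`-homogeneous map on `C`. -/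
def PosHomMap {n : ℕ} (α : ℝ) (C : Set (Fin n → ℝ)) (Z : (Fin n → ℝ) → Fin n → ℝ) : Prop :=
  ∀ y ∈ C, ∀ t : ℝ, 0 < t → Z (t • y) = t ^ α • Z y

/-- Fundamental tensor `g_ij(y) = (1/2) L_{·i·j}(y)`. -/
def gmet {n : ℕ} (L : (Fin n → ℝ) → ℝ) (y : Fin n → ℝ) : Matrix (Fin n) (Fin n) ℝ :=
  Matrix.of fun i j => (1 / 2) * pd (pd L i) j y

/-- Inverse fundamental tensor `g^{ij}`. -/
def ginv {n : ℕ} (L : (Fin n → ℝ) → ℝ) (y : Fin n → ℝ) : Matrix (Fin n) (Fin n) ℝ :=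
  (gmet L y)⁻¹

/-!
The comparison function `ψ = L^{α/2}` is positive and `α`-homogeneous, and since
`L_{·a} = 2 g_{ab} y^b` (Euler) and `g^{ab} L_{·a·b} = 2n`, it solves
`L g^{ab} ψ_{·a·b} = α(α+n-2) ψ`. The ratio `f / ψ` is `0`-homogeneous, so it attains its maximum
`M` at some `z ≠ 0`. Then `f - M ψ ≤ 0` is maximal at `z`, where its Hessian traced against the
positive definite `g^{ab}` is `≤ 0`; subtracting the two equations gives
`(κ - α(α+n-2)) M ψ(z) ≤ 0`, hence `M ≤ 0` and `f ≤ M ψ ≤ 0`. The same applied to `-f` gives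
`f = 0`.
-/

open Filter Topology

variable {n : ℕ}

theorem fderiv_apply_eq_sum_mul_pd (f : (Fin n → ℝ) → ℝ) (y v : Fin n → ℝ) :
    fderiv ℝ f y v = ∑ a, v a * pd f a y := by
  conv_lhs => rw [pi_eq_sum_univ' v]
  simp [pd]

theorem pd_neg (f : (Fin n → ℝ) → ℝ) (a : Fin n) : pd (fun z => -f z) a = fun y => -pd f a y := by
  funext y
  simp [pd, fderiv_fun_neg]

theorem ContDiffAt.differentiableAt_pd {f : (Fin n → ℝ) → ℝ} {y : Fin n → ℝ}
    (hf : ContDiffAt ℝ 2 f y) (i : Fin n) : DifferentiableAt ℝ (pd f i) y :=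
  ((hf.fderiv_right (m := 1) le_rfl).clm_apply contDiffAt_const).differentiableAt one_ne_zero

theorem ContDiffOn.contDiffAt_two {s : Set (Fin n → ℝ)} (hs : IsOpen s) {f : (Fin n → ℝ) → ℝ}
    (hf : ContDiffOn ℝ (⊤ : ℕ∞) f s) {y : Fin n → ℝ} (hy : y ∈ s) : ContDiffAt ℝ 2 f y :=
  (hf.contDiffAt (hs.mem_nhds hy)).of_le (WithTop.coe_le_coe.mpr le_top)

namespace PosHom

variable {α : ℝ} {C : Set (Fin n → ℝ)} {f : (Fin n → ℝ) → ℝ}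

/-- Euler's relation: differentiate `t ↦ f (t • y) = t ^ α * f y` at `t = 1`. -/
theorem sum_mul_pd (hf : PosHom α C f) {y : Fin n → ℝ} (hy : y ∈ C)
    (hd : DifferentiableAt ℝ f y) : ∑ a, y a * pd f a y = α * f y := by
  have hline : HasDerivAt (fun t : ℝ => f (t • y)) (fderiv ℝ f y y) 1 := by
    have hsmul : HasDerivAt (fun t : ℝ => t • y) y 1 := by
      simpa using (hasDerivAt_id (1 : ℝ)).smul_const y
    have hF : HasFDerivAt f (fderiv ℝ f y) ((1 : ℝ) • y) := by rw [one_smul]; exact hd.hasFDerivAt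
    exact hF.comp_hasDerivAt 1 hsmul
  have hpow : HasDerivAt (fun t : ℝ => f (t • y)) (α * f y) 1 := by
    have hrpow : HasDerivAt (fun t : ℝ => t ^ α * f y) (α * f y) 1 := by
      simpa using
        (Real.hasDerivAt_rpow_const (x := 1) (p := α) (Or.inl one_ne_zero)).mul_const (f y)
    refine hrpow.congr_of_eventuallyEq ?_
    filter_upwards [eventually_gt_nhds one_pos] with t ht
    exact hf y hy t ht
  rw [← fderiv_apply_eq_sum_mul_pd, hline.unique hpow]

theorem pd (hf : PosHom α C f) (hCo : IsOpen C) (hC : Conic C) (hd : DifferentiableOn ℝ f C)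
    (i : Fin n) : PosHom (α - 1) C (_root_.pd f i) := by
  intro y hy t ht
  have hscaled : HasFDerivAt (fun z => f (t • z))
      ((fderiv ℝ f (t • y)).comp (t • ContinuousLinearMap.id ℝ (Fin n → ℝ))) y :=
    ((hd _ (hC hy ht)).differentiableAt (hCo.mem_nhds (hC hy ht))).hasFDerivAt.comp y
      ((hasFDerivAt_id y).const_smul t)
  have hpow : HasFDerivAt (fun z => f (t • z)) (t ^ α • fderiv ℝ f y) y := by
    refine ((hd y hy).differentiableAt (hCo.mem_nhds hy)).hasFDerivAt.const_smul (t ^ α)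
      |>.congr_of_eventuallyEq ?_
    filter_upwards [hCo.mem_nhds hy] with z hz
    exact hf z hz t ht
  have hi := congrArg (fun φ : (Fin n → ℝ) →L[ℝ] ℝ => φ (Pi.single i 1)) (hscaled.unique hpow)
  simp only [ContinuousLinearMap.comp_apply, FunLike.coe_smul, Pi.smul_apply,
    ContinuousLinearMap.id_apply, map_smul, smul_eq_mul] at hi
  rw [Real.rpow_sub ht, Real.rpow_one]
  simp only [_root_.pd]
  field_simp
  linarith

theorem neg (hf : PosHom α C f) : PosHom α C (fun y => -f y) := by
  intro y hy t ht
  dsimp only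
  rw [hf y hy t ht, mul_neg]

theorem div {β : ℝ} {g : (Fin n → ℝ) → ℝ} (hf : PosHom α C f) (hg : PosHom β C g) :
    PosHom (α - β) C (fun y => f y / g y) := by
  intro y hy t ht
  dsimp only
  rw [hf y hy t ht, hg y hy t ht, Real.rpow_sub ht]
  ring

theorem rpow (hf : PosHom α C f) (hpos : ∀ y ∈ C, 0 ≤ f y) (γ : ℝ) :
    PosHom (α * γ) C (fun y => f y ^ γ) := by
  intro y hy t ht
  dsimp only
  rw [hf y hy t ht, Real.mul_rpow (Real.rpow_nonneg ht.le α) (hpos y hy), Real.rpow_mul ht.le]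

/-- A `0`-homogeneous function is determined by its values on the unit sphere, which is
compact. -/
theorem exists_isMaxOn {h : (Fin n → ℝ) → ℝ} (hh : PosHom 0 {y | y ≠ 0} h)
    (hc : ContinuousOn h {y | y ≠ 0}) {y₀ : Fin n → ℝ} (hy₀ : y₀ ≠ 0) :
    ∃ z, z ≠ 0 ∧ IsMaxOn h {y | y ≠ 0} z := by
  have hsphere : Metric.sphere (0 : Fin n → ℝ) 1 ⊆ {y | y ≠ 0} := fun z hz h0 => by
    simp [h0] at hz
  have hnormalize : ∀ y : Fin n → ℝ, y ≠ 0 →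
      ‖y‖⁻¹ • y ∈ Metric.sphere (0 : Fin n → ℝ) 1 ∧ h (‖y‖⁻¹ • y) = h y := fun y hy => by
    refine ⟨by simp [norm_smul, norm_ne_zero_iff.mpr hy], ?_⟩
    rw [hh y hy _ (inv_pos.mpr (norm_pos_iff.mpr hy)), Real.rpow_zero, one_mul]
  obtain ⟨z, hz, hmax⟩ := (isCompact_sphere (0 : Fin n → ℝ) 1).exists_isMaxOn
    ⟨_, (hnormalize y₀ hy₀).1⟩ (hc.mono hsphere)
  refine ⟨z, hsphere hz, fun y hy => ?_⟩
  show h y ≤ h z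
  rw [← (hnormalize y hy).2]
  exact hmax (hnormalize y hy).1

theorem exists_eq_mul_and_le_mul {ψ : (Fin n → ℝ) → ℝ} (hf : PosHom α {y | y ≠ 0} f)
    (hψ : PosHom α {y | y ≠ 0} ψ) (hfc : ContinuousOn f {y | y ≠ 0})
    (hψc : ContinuousOn ψ {y | y ≠ 0}) (hψpos : ∀ y : Fin n → ℝ, y ≠ 0 → 0 < ψ y)
    {y₀ : Fin n → ℝ} (hy₀ : y₀ ≠ 0) :
    ∃ z, z ≠ 0 ∧ ∃ M : ℝ, f z = M * ψ z ∧ ∀ y : Fin n → ℝ, y ≠ 0 → f y ≤ M * ψ y := by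
  obtain ⟨z, hz, hmax⟩ := (sub_self α ▸ hf.div hψ).exists_isMaxOn
    (hfc.div hψc fun y hy => (hψpos y hy).ne') hy₀
  exact ⟨z, hz, f z / ψ z, (div_mul_cancel₀ _ (hψpos z hz).ne').symm,
    fun y hy => (div_le_iff₀ (hψpos y hy)).mp (hmax hy)⟩

end PosHom

def traceHessian (L f : (Fin n → ℝ) → ℝ) (y : Fin n → ℝ) : ℝ :=
  ∑ a, ∑ b, ginv L y a b * pd (pd f a) b y

theorem traceHessian_self {L : (Fin n → ℝ) → ℝ} {y : Fin n → ℝ} (hg : (gmet L y).PosDef) :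
    traceHessian L L y = 2 * n := by
  have hsymm : ∀ a b, pd (pd L a) b y = 2 * gmet L y b a := fun a b => by
    rw [← hg.isHermitian.apply b a]
    simp [gmet]
  calc traceHessian L L y = 2 * ((gmet L y)⁻¹ * gmet L y).trace := by
        simp only [traceHessian, ginv, hsymm, Matrix.trace, Matrix.diag, Matrix.mul_apply,
          Finset.mul_sum]
        exact Finset.sum_congr rfl fun a _ => Finset.sum_congr rfl fun b _ => by ring
    _ = 2 * n := by
        rw [Matrix.nonsing_inv_mul _ (hg.isUnit.map Matrix.detMonoidHom)]
        simp

section FinslerDatum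

open Matrix

variable {C : Set (Fin n → ℝ)} {L : (Fin n → ℝ) → ℝ} {y : Fin n → ℝ}

theorem pd_eq_two_mul_gmet_mulVec (hCo : IsOpen C) (hC : Conic C)
    (hL : ContDiffOn ℝ (⊤ : ℕ∞) L C) (hLhom : PosHom 2 C L) (hy : y ∈ C) (a : Fin n) :
    pd L a y = 2 * (gmet L y *ᵥ y) a := by
  have h := (hLhom.pd hCo hC (hL.differentiableOn (by simp)) a).sum_mul_pd hy
    ((hL.contDiffAt_two hCo hy).differentiableAt_pd a)
  norm_num at h
  rw [← h]
  simp only [gmet, Matrix.mulVec, dotProduct, Matrix.of_apply, Finset.mul_sum]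
  exact Finset.sum_congr rfl fun b _ => by ring

theorem eq_dotProduct_gmet_mulVec (hCo : IsOpen C) (hC : Conic C)
    (hL : ContDiffOn ℝ (⊤ : ℕ∞) L C) (hLhom : PosHom 2 C L) (hy : y ∈ C) :
    L y = y ⬝ᵥ (gmet L y *ᵥ y) := by
  have h := hLhom.sum_mul_pd hy ((hL.contDiffAt_two hCo hy).differentiableAt two_ne_zero)
  simp only [pd_eq_two_mul_gmet_mulVec hCo hC hL hLhom hy] at h
  simp only [dotProduct]
  linarith [show ∑ a, y a * (2 * (gmet L y *ᵥ y) a) = 2 * ∑ a, y a * (gmet L y *ᵥ y) a by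
    rw [Finset.mul_sum]; exact Finset.sum_congr rfl fun a _ => by ring]

theorem pos_of_posDef_gmet (hCo : IsOpen C) (hC : Conic C)
    (hL : ContDiffOn ℝ (⊤ : ℕ∞) L C) (hLhom : PosHom 2 C L) (hy : y ∈ C) (hy0 : y ≠ 0)
    (hg : (gmet L y).PosDef) :
    0 < L y := by
  rw [eq_dotProduct_gmet_mulVec hCo hC hL hLhom hy]
  simpa using hg.dotProduct_mulVec_pos hy0

theorem sum_ginv_mul_pd_mul_pd (hCo : IsOpen C) (hC : Conic C)
    (hL : ContDiffOn ℝ (⊤ : ℕ∞) L C) (hLhom : PosHom 2 C L) (hy : y ∈ C) (hg : (gmet L y).PosDef) :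
    ∑ a, ∑ b, ginv L y a b * pd L a y * pd L b y = 4 * L y := by
  set w := gmet L y *ᵥ y
  have hw : ginv L y *ᵥ w = y := by
    rw [ginv, Matrix.mulVec_mulVec, Matrix.nonsing_inv_mul _ (hg.isUnit.map Matrix.detMonoidHom),
      Matrix.one_mulVec]
  calc ∑ a, ∑ b, ginv L y a b * pd L a y * pd L b y
        = ∑ a, ∑ b, ginv L y a b * (2 * w a) * (2 * w b) := by
        simp only [pd_eq_two_mul_gmet_mulVec hCo hC hL hLhom hy, w]
    _ = 4 * (w ⬝ᵥ (ginv L y *ᵥ w)) := by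
        simp only [dotProduct, Matrix.mulVec, Finset.mul_sum]
        exact Finset.sum_congr rfl fun a _ => Finset.sum_congr rfl fun b _ => by ring
    _ = 4 * L y := by
        rw [hw, dotProduct_comm, ← eq_dotProduct_gmet_mulVec hCo hC hL hLhom hy]

end FinslerDatum

section Calculus

variable {f g : (Fin n → ℝ) → ℝ} {y : Fin n → ℝ}

theorem Filter.EventuallyEq.pd_eq (h : f =ᶠ[𝓝 y] g) (a : Fin n) : pd f a y = pd g a y := by
  simp only [pd, h.fderiv_eq]

theorem pd_sub (hf : DifferentiableAt ℝ f y) (hg : DifferentiableAt ℝ g y) (a : Fin n) :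
    pd (fun z => f z - g z) a y = pd f a y - pd g a y := by
  simp only [pd, fderiv_fun_sub hf hg, _root_.sub_apply]

theorem pd_const_mul (hf : DifferentiableAt ℝ f y) (c : ℝ) (a : Fin n) :
    pd (fun z => c * f z) a y = c * pd f a y := by
  simp only [pd, fderiv_const_mul hf, FunLike.coe_smul, Pi.smul_apply, smul_eq_mul]

theorem pd_mul (hf : DifferentiableAt ℝ f y) (hg : DifferentiableAt ℝ g y) (a : Fin n) :
    pd (fun z => f z * g z) a y = f y * pd g a y + g y * pd f a y := by
  simp only [pd, fderiv_fun_mul hf hg, _root_.add_apply, FunLike.coe_smul,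
    Pi.smul_apply, smul_eq_mul]

theorem pd_rpow (hf : DifferentiableAt ℝ f y) (hpos : 0 < f y) (γ : ℝ) (a : Fin n) :
    pd (fun z => f z ^ γ) a y = γ * f y ^ (γ - 1) * pd f a y := by
  have h := ((Real.hasDerivAt_rpow_const (p := γ) (Or.inl hpos.ne')).comp_hasFDerivAt y
    hf.hasFDerivAt).fderiv
  simp only [pd, Function.comp_def] at h ⊢
  simp only [h, FunLike.coe_smul, Pi.smul_apply, smul_eq_mul]

theorem pd_pd_sub_const_mul (hf : ContDiffAt ℝ 2 f y) (hg : ContDiffAt ℝ 2 g y) (c : ℝ)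
    (a b : Fin n) :
    pd (pd (fun z => f z - c * g z) a) b y = pd (pd f a) b y - c * pd (pd g a) b y := by
  have hev : pd (fun z => f z - c * g z) a =ᶠ[𝓝 y] fun z => pd f a z - c * pd g a z := by
    filter_upwards [hf.eventually (by simp), hg.eventually (by simp)] with z hfz hgz
    have hgz' := hgz.differentiableAt two_ne_zero
    rw [pd_sub (hfz.differentiableAt two_ne_zero) (hgz'.const_mul c), pd_const_mul hgz']
  rw [hev.pd_eq, pd_sub (hf.differentiableAt_pd a) ((hg.differentiableAt_pd a).const_mul c),
    pd_const_mul (hg.differentiableAt_pd a)]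

theorem pd_pd_rpow (hf : ContDiffAt ℝ 2 f y) (hpos : 0 < f y) (γ : ℝ) (a b : Fin n) :
    pd (pd (fun z => f z ^ γ) a) b y
      = γ * f y ^ (γ - 1) * pd (pd f a) b y
        + γ * (γ - 1) * f y ^ (γ - 2) * pd f a y * pd f b y := by
  have hd : DifferentiableAt ℝ f y := hf.differentiableAt two_ne_zero
  have hev : pd (fun z => f z ^ γ) a =ᶠ[𝓝 y] fun z => γ * (f z ^ (γ - 1) * pd f a z) := by
    filter_upwards [hf.eventually (by simp), hf.continuousAt.eventually (lt_mem_nhds hpos)]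
      with z hfz hposz
    rw [pd_rpow (hfz.differentiableAt two_ne_zero) hposz, mul_assoc]
  have hpow : DifferentiableAt ℝ (fun z => f z ^ (γ - 1)) y := hd.rpow_const (Or.inl hpos.ne')
  have hprod : DifferentiableAt ℝ (fun z => f z ^ (γ - 1) * pd f a z) y :=
    hpow.mul (hf.differentiableAt_pd a)
  rw [hev.pd_eq, pd_const_mul hprod, pd_mul hpow (hf.differentiableAt_pd a), pd_rpow hd hpos,
    show γ - 1 - 1 = γ - 2 by ring]
  ring

end Calculus

section TraceHessian

variable {L f g : (Fin n → ℝ) → ℝ} {y : Fin n → ℝ}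

theorem traceHessian_neg : traceHessian L (fun z => -f z) y = -traceHessian L f y := by
  simp only [traceHessian, pd_neg, mul_neg, Finset.sum_neg_distrib]

theorem traceHessian_sub_const_mul (hf : ContDiffAt ℝ 2 f y) (hg : ContDiffAt ℝ 2 g y) (c : ℝ) :
    traceHessian L (fun z => f z - c * g z) y = traceHessian L f y - c * traceHessian L g y := by
  simp only [traceHessian, pd_pd_sub_const_mul hf hg, mul_sub, Finset.sum_sub_distrib,
    Finset.mul_sum]
  congr 1
  exact Finset.sum_congr rfl fun a _ => Finset.sum_congr rfl fun b _ => by ring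

theorem traceHessian_rpow {C : Set (Fin n → ℝ)} (hCo : IsOpen C) (hC : Conic C)
    (hL : ContDiffOn ℝ (⊤ : ℕ∞) L C) (hLhom : PosHom 2 C L) (hy : y ∈ C) (hpos : 0 < L y)
    (hg : (gmet L y).PosDef) (γ : ℝ) :
    L y * traceHessian L (fun z => L z ^ γ) y = (2 * n * γ + 4 * γ * (γ - 1)) * L y ^ γ := by
  have hsplit : traceHessian L (fun z => L z ^ γ) y
      = γ * L y ^ (γ - 1) * traceHessian L L y
        + γ * (γ - 1) * L y ^ (γ - 2) * ∑ a, ∑ b, ginv L y a b * pd L a y * pd L b y := by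
    simp only [traceHessian, pd_pd_rpow (hL.contDiffAt_two hCo hy) hpos, Finset.mul_sum,
      ← Finset.sum_add_distrib]
    exact Finset.sum_congr rfl fun a _ => Finset.sum_congr rfl fun b _ => by ring
  rw [hsplit, traceHessian_self hg, sum_ginv_mul_pd_mul_pd hCo hC hL hLhom hy hg,
    show γ - 2 = γ - 1 - 1 by ring, Real.rpow_sub_one hpos.ne', Real.rpow_sub_one hpos.ne',
    Real.rpow_sub_one hpos.ne']
  field_simp

end TraceHessian

theorem IsLocalMax.deriv_deriv_nonpos {φ : ℝ → ℝ} {x : ℝ} (h : IsLocalMax φ x)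
    (hc : ContinuousAt φ x) : deriv (deriv φ) x ≤ 0 := by
  by_contra! hpos
  have hmin := isLocalMin_of_deriv_deriv_pos hpos h.deriv_eq_zero hc
  have hconst : φ =ᶠ[𝓝 x] fun _ => φ x :=
    (Filter.Eventually.and h hmin).mono fun y hy => le_antisymm hy.1 hy.2
  rw [hconst.deriv.deriv_eq] at hpos
  simp at hpos

theorem IsLocalMax.sum_mul_pd_pd_nonpos {u : (Fin n → ℝ) → ℝ} {z : Fin n → ℝ}
    (hmax : IsLocalMax u z) (hu : ContDiffAt ℝ 2 u z) (v : Fin n → ℝ) :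
    ∑ a, ∑ b, v a * v b * pd (pd u a) b z ≤ 0 := by
  set line : ℝ → Fin n → ℝ := fun t => z + t • v
  have hline : ∀ t, HasDerivAt line v t := fun t => by
    simpa only [one_smul] using ((hasDerivAt_id' t).smul_const v).const_add z
  have hline0 : line 0 = z := by simp [line]
  have hcont : ContinuousAt line 0 := (hline 0).continuousAt
  have hderiv : deriv (u ∘ line) =ᶠ[𝓝 0] fun t => ∑ a, v a * pd u a (line t) := by
    have hdiff : ∀ᶠ t in 𝓝 0, DifferentiableAt ℝ u (line t) := hcont.eventually
      (hline0 ▸ (hu.eventually (by simp)).mono fun w hw => hw.differentiableAt two_ne_zero)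
    filter_upwards [hdiff] with t ht
    rw [(ht.hasFDerivAt.comp_hasDerivAt t (hline t)).deriv, fderiv_apply_eq_sum_mul_pd]
  have hderiv2 : HasDerivAt (fun t => ∑ a, v a * pd u a (line t))
      (∑ a, ∑ b, v a * v b * pd (pd u a) b z) 0 := by
    refine HasDerivAt.fun_sum fun a _ => ?_
    have hpd : HasFDerivAt (pd u a) (fderiv ℝ (pd u a) z) (line 0) :=
      hline0 ▸ (hu.differentiableAt_pd a).hasFDerivAt
    have := (hpd.comp_hasDerivAt 0 (hline 0)).const_mul (v a)
    rw [fderiv_apply_eq_sum_mul_pd, Finset.mul_sum] at this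
    refine this.congr_deriv ?_
    exact Finset.sum_congr rfl fun b _ => by ring
  have := (hline0 ▸ hmax : IsLocalMax u (line 0)).comp_continuous hcont |>.deriv_deriv_nonpos
    ((hline0 ▸ hu.continuousAt : ContinuousAt u (line 0)).comp hcont)
  rwa [hderiv.deriv_eq, hderiv2.deriv] at this

theorem Matrix.PosSemidef.sum_mul_nonpos {ι : Type*} [Fintype ι] {P H : Matrix ι ι ℝ}
    (hP : P.PosSemidef) (hH : ∀ v : ι → ℝ, ∑ a, ∑ b, v a * v b * H a b ≤ 0) :
    ∑ a, ∑ b, P a b * H a b ≤ 0 := by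
  obtain ⟨m, w, rfl⟩ := Matrix.posSemidef_iff_eq_sum_vecMulVec.mp hP
  calc _ = ∑ i, ∑ a, ∑ b, w i a * w i b * H a b := by
        simp only [Matrix.sum_apply, vecMulVec_apply, star_trivial, Finset.sum_mul]
        exact (Finset.sum_congr rfl fun _ _ => Finset.sum_comm).trans Finset.sum_comm
    _ ≤ 0 := Finset.sum_nonpos fun i _ => hH (w i)

theorem IsLocalMax.traceHessian_nonpos {L u : (Fin n → ℝ) → ℝ} {z : Fin n → ℝ}
    (hmax : IsLocalMax u z) (hu : ContDiffAt ℝ 2 u z) (hg : (gmet L z).PosDef) :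
    traceHessian L u z ≤ 0 :=
  hg.inv.posSemidef.sum_mul_nonpos (H := Matrix.of fun a b => pd (pd u a) b z)
    (hmax.sum_mul_pd_pd_nonpos hu)

theorem nonpos_of_mul_eq_mul_traceHessian {L : (Fin n → ℝ) → ℝ}
    (hL : ContDiffOn ℝ (⊤ : ℕ∞) L {y | y ≠ 0}) (hLhom : PosHom 2 {y | y ≠ 0} L)
    (hg : ∀ y : Fin n → ℝ, y ≠ 0 → (gmet L y).PosDef) {α κ : ℝ} (hκ : α * (α + n - 2) < κ)
    {f : (Fin n → ℝ) → ℝ} (hf : ContDiffOn ℝ (⊤ : ℕ∞) f {y | y ≠ 0})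
    (hfhom : PosHom α {y | y ≠ 0} f)
    (heq : ∀ y : Fin n → ℝ, y ≠ 0 → κ * f y = L y * traceHessian L f y)
    {y : Fin n → ℝ} (hy : y ≠ 0) : f y ≤ 0 := by
  have hCo : IsOpen {y : Fin n → ℝ | y ≠ 0} := isOpen_ne
  have hC : Conic {y : Fin n → ℝ | y ≠ 0} := fun y hy t ht => smul_ne_zero ht.ne' hy
  have hLpos : ∀ z : Fin n → ℝ, z ≠ 0 → 0 < L z := fun z hz =>
    pos_of_posDef_gmet hCo hC hL hLhom hz hz (hg z hz)
  set ψ : (Fin n → ℝ) → ℝ := fun z => L z ^ (α / 2)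
  have hψpos : ∀ z : Fin n → ℝ, z ≠ 0 → 0 < ψ z := fun z hz => Real.rpow_pos_of_pos (hLpos z hz) _
  have hψhom : PosHom α {y | y ≠ 0} ψ := by
    simpa [mul_div_cancel₀] using hLhom.rpow (fun z hz => (hLpos z hz).le) (α / 2)
  obtain ⟨z, hz, M, hfz, hbound⟩ := hfhom.exists_eq_mul_and_le_mul hψhom hf.continuousOn
    (hL.continuousOn.rpow_const fun z hz => Or.inl (hLpos z hz).ne') hψpos hy
  have hlocmax : IsLocalMax (fun w => f w - M * ψ w) z := by
    filter_upwards [hCo.mem_nhds hz] with w hw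
    rw [hfz, sub_self]
    linarith [hbound w hw]
  have hf2 := hf.contDiffAt_two hCo hz
  have hψ2 : ContDiffAt ℝ 2 ψ z := (hL.contDiffAt_two hCo hz).rpow_const_of_ne (hLpos z hz).ne'
  have hnonpos := hlocmax.traceHessian_nonpos (hf2.sub (contDiffAt_const.mul hψ2)) (hg z hz)
  rw [traceHessian_sub_const_mul hf2 hψ2] at hnonpos
  have hψeq : L z * traceHessian L ψ z = α * (α + n - 2) * ψ z := by
    rw [traceHessian_rpow hCo hC hL hLhom hz (hLpos z hz) (hg z hz) (α / 2)]
    ring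
  have hMψ : (κ - α * (α + n - 2)) * (M * ψ z) ≤ 0 := by
    calc (κ - α * (α + n - 2)) * (M * ψ z)
        = L z * (traceHessian L f z - M * traceHessian L ψ z) := by
          linear_combination heq z hz - κ * hfz + M * hψeq
      _ ≤ 0 := mul_nonpos_of_nonneg_of_nonpos (hLpos z hz).le hnonpos
  have hM : M ≤ 0 := nonpos_of_mul_nonpos_left
    (nonpos_of_mul_nonpos_right hMψ (sub_pos.mpr hκ)) (hψpos z hz)
  calc f y ≤ M * ψ y := hbound y hy
    _ ≤ 0 := mul_nonpos_of_nonpos_of_nonneg hM (hψpos y hy).le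

theorem maximum_principle_finsler_case_general
    {n : ℕ} (L : (Fin n → ℝ) → ℝ)
    (hLsmooth : ContDiffOn ℝ (⊤ : ℕ∞) L {y : Fin n → ℝ | y ≠ 0})
    (hLhom : PosHom 2 {y : Fin n → ℝ | y ≠ 0} L)
    (hgpos : ∀ y : Fin n → ℝ, y ≠ 0 → (gmet L y).PosDef)
    (α κ : ℝ) (hκ : α * (α + (n : ℝ) - 2) < κ)
    (f : (Fin n → ℝ) → ℝ)
    (hfsmooth : ContDiffOn ℝ (⊤ : ℕ∞) f {y : Fin n → ℝ | y ≠ 0})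
    (hfhom : PosHom α {y : Fin n → ℝ | y ≠ 0} f)
    (heq : ∀ y : Fin n → ℝ, y ≠ 0 →
      κ * f y - L y * ∑ a, ∑ b, ginv L y a b * pd (pd f a) b y = 0) :
    ∀ y : Fin n → ℝ, y ≠ 0 → f y = 0 := by
  have hsol : ∀ y : Fin n → ℝ, y ≠ 0 → κ * f y = L y * traceHessian L f y :=
    fun y hy => sub_eq_zero.mp (heq y hy)
  intro y hy
  have hneg := nonpos_of_mul_eq_mul_traceHessian hLsmooth hLhom hgpos hκ hfsmooth.neg hfhom.neg
    (fun z hz => by rw [traceHessian_neg, mul_neg, mul_neg, hsol z hz]) hy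
  exact le_antisymm
    (nonpos_of_mul_eq_mul_traceHessian hLsmooth hLhom hgpos hκ hfsmooth hfhom hsol hy)
    (neg_nonpos.mp hneg)

/-- **Lemma 5.12, case (B).** Let `L` be a fiberwise Finsler datum on `ℝ^n ∖ {0}` (smooth,
positively 2-homogeneous, with positive definite fundamental tensor) and `κ > α(α+n−2)`.
Any smooth positively `α`-homogeneous solution `f` of `κ f − L g^{ab} f_{·a·b} = 0` on
`ℝ^n ∖ {0}` vanishes identically. -/
theorem maximum_principle_finsler_case
    {n : ℕ} (hn : 2 ≤ n) (L : (Fin n → ℝ) → ℝ)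
    (hLsmooth : ContDiffOn ℝ (⊤ : ℕ∞) L {y : Fin n → ℝ | y ≠ 0})
    (hLhom : PosHom 2 {y : Fin n → ℝ | y ≠ 0} L)
    (hgpos : ∀ y : Fin n → ℝ, y ≠ 0 → (gmet L y).PosDef)
    (α κ : ℝ) (hκ : α * (α + (n : ℝ) - 2) < κ)
    (f : (Fin n → ℝ) → ℝ)
    (hfsmooth : ContDiffOn ℝ (⊤ : ℕ∞) f {y : Fin n → ℝ | y ≠ 0})
    (hfhom : PosHom α {y : Fin n → ℝ | y ≠ 0} f)
    (heq : ∀ y : Fin n → ℝ, y ≠ 0 →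
      κ * f y - L y * ∑ a, ∑ b, ginv L y a b * pd (pd f a) b y = 0) :
    ∀ y : Fin n → ℝ, y ≠ 0 → f y = 0 :=
  maximum_principle_finsler_case_general L hLsmooth hLhom hgpos α κ hκ f hfsmooth hfhom heq
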